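/- Let R be a commutative noetherian ring and d ≥ 0 an integer. Let M be a finitely generated R-module admitting a resolution 0 → P_d → ⋯ → P_1 → P_0 → M → 0 by finitely generated projective R-modules (some P_i possibly zero), and suppose Ext^i_R(M, R) = 0 for all i < d. Then N := Ext^d_R(M, R) is a finitely generated R-module admitting a resolution of length at most d by finitely generated projective R-modules, Ext^i_R(N, R) = 0 for all i ≠ d, and there is an isomorphism of R-modules M ≅ Ext^d_R(Ext^d_R(M, R), R). -/

import Mathlib

open CategoryTheory CategoryTheory.Limits

universe u

/-- `M` admits a resolution `0 → P_d → ⋯ → P_1 → P_0 → M → 0` by finitely generated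
projective `R`-modules (some `P_i` possibly zero). -/
def HasFinProjResLength (R : Type u) [CommRing R] (d : ℕ) (M : ModuleCat.{u} R) : Prop :=
  ∃ (P : ChainComplex (ModuleCat.{u} R) ℕ) (ε : P.X 0 ⟶ M),
    (∀ i : ℕ, Projective (P.X i)) ∧ (∀ i : ℕ, Module.Finite R (P.X i)) ∧
    (∀ i : ℕ, d < i → IsZero (P.X i)) ∧
    Epi ε ∧ (∃ h0 : P.d 1 0 ≫ ε = 0, (ShortComplex.mk (P.d 1 0) ε h0).Exact) ∧
    (∀ n : ℕ, P.ExactAt (n + 1))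

/-- The Ext modules `Ext^n_R(M, N)` for `R`-modules `M`, `N`. -/
noncomputable def extModule (R : Type u) [CommRing R] (n : ℕ)
    (M N : ModuleCat.{u} R) : ModuleCat.{u} R :=
  ((Ext R (ModuleCat.{u} R) n).obj (Opposite.op M)).obj N

/-!
Dualising the resolution `P → M` gives the cochain complex `Hom(P, R)` of finitely generated
projective modules in degrees `0, …, d`, whose cohomology is `Ext^*(M, R)`. Since this vanishes
below `d`, the complex read backwards is a projective resolution of length `d` of its top
cohomology `N = Ext^d(M, R)`. Dualising that resolution once more gives back `P` read backwards,
because finitely generated projective modules are reflexive; its cohomology, which computes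
`Ext^*(N, R)`, is therefore `M = coker(P₁ → P₀)` in degree `d` and zero elsewhere.
-/

open HomologicalComplex

lemma CategoryTheory.ShortComplex.exact_mk_iff_of_eq {V : Type*} [Category* V]
    [HasZeroMorphisms V] {X₁ X₂ X₃ : V} {f f' : X₁ ⟶ X₂} {g : X₂ ⟶ X₃} (w : f ≫ g = 0)
    (h : f = f') : (ShortComplex.mk f g w).Exact ↔ (ShortComplex.mk f' g (h ▸ w)).Exact := by
  subst h
  rfl

namespace CategoryTheory.ProjectiveResolution

variable {C : Type*} [Category* C] [Abelian C]

noncomputable def ofExact {Z : C} (K : ChainComplex C ℕ) (hK : ∀ n, Projective (K.X n))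
    (ε : K.X 0 ⟶ Z) (w : K.d 1 0 ≫ ε = 0) (hε : (ShortComplex.mk _ _ w).Exact) [Epi ε]
    (hexact : ∀ n, K.ExactAt (n + 1)) : ProjectiveResolution Z where
  complex := K
  projective := hK
  π := (ChainComplex.toSingle₀Equiv K Z).symm ⟨ε, w⟩
  quasiIso := ⟨fun n => by
    cases n with
    | zero =>
      rw [ChainComplex.quasiIsoAt₀_iff,
        ShortComplex.quasiIso_iff_of_zeros' _ (K.shape _ _ (by simp)) rfl rfl]
      refine (ShortComplex.exact_and_epi_g_iff_of_iso ?_).2 ⟨hε, inferInstanceAs (Epi ε)⟩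
      exact ShortComplex.isoMk (Iso.refl _) (Iso.refl _) (Iso.refl _)
        ((Category.id_comp _).trans (Category.comp_id _).symm)
        ((Category.id_comp ε).trans ((ChainComplex.toSingle₀Equiv_symm_apply_f_zero ε w).symm.trans
          (Category.comp_id _).symm))
    | succ n =>
      rw [quasiIsoAt_iff_exactAt' _ _ (ChainComplex.exactAt_succ_single_obj _ _)]
      exact hexact n⟩

end CategoryTheory.ProjectiveResolution

namespace HomologicalComplex

variable {V : Type*} [Category* V] {ι ι' : Type*} {c : ComplexShape ι} {c' : ComplexShape ι'}

section HasZeroMorphisms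

variable [HasZeroMorphisms V]

open Classical in
/-- Reducible, so that `(K.reindex c f).X i` and `K.X (f i)` are interchangeable for `rw` and
instance search. -/
noncomputable abbrev reindex (K : HomologicalComplex V c') (c : ComplexShape ι) (f : ι → ι') :
    HomologicalComplex V c where
  X i := K.X (f i)
  d i j := if c.Rel i j then K.d (f i) (f j) else 0
  shape i j h := if_neg h
  d_comp_d' i j k hij hjk := by rw [if_pos hij, if_pos hjk, K.d_comp_d]

variable (K : HomologicalComplex V c') (f : ι → ι')

lemma reindex_d {i j : ι} (h : c.Rel i j) : (K.reindex c f).d i j = K.d (f i) (f j) :=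
  if_pos h

lemma exactAt_reindex_iff {i j k : ι} (hij : c.Rel i j) (hjk : c.Rel j k)
    (hi : c'.prev (f j) = f i) (hk : c'.next (f j) = f k) :
    (K.reindex c f).ExactAt j ↔ K.ExactAt (f j) := by
  rw [exactAt_iff' _ i j k (c.prev_eq' hij) (c.next_eq' hjk), K.exactAt_iff' _ _ _ hi hk]
  refine ShortComplex.exact_iff_of_iso (ShortComplex.isoMk (Iso.refl _) (Iso.refl _) (Iso.refl _)
    ?_ ?_)
  · exact (Category.id_comp _).trans ((K.reindex_d f hij).symm.trans (Category.comp_id _).symm)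
  · exact (Category.id_comp _).trans ((K.reindex_d f hjk).symm.trans (Category.comp_id _).symm)

lemma exactAt_of_isZero_X (L : HomologicalComplex V c) {j : ι} (h : IsZero (L.X j)) :
    L.ExactAt j :=
  (L.exactAt_iff j).2 (ShortComplex.exact_of_isZero_X₂ _ h)

end HasZeroMorphisms

variable [Preadditive V] [HasZeroObject V]

lemma exactAt_iff_mono (L : HomologicalComplex V c) {j k : ι} (hk : c.next j = k)
    (h : L.d (c.prev j) j = 0) : L.ExactAt j ↔ Mono (L.d j k) := by
  rw [L.exactAt_iff' _ j k rfl hk]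
  exact (L.sc' (c.prev j) j k).exact_iff_mono h

lemma exactAt_reindex_iff_of_d_eq_zero (K : HomologicalComplex V c') (f : ι → ι') {j k : ι}
    (hjk : c.Rel j k) (hk : c'.next (f j) = f k) (h : (K.reindex c f).d (c.prev j) j = 0)
    (h' : K.d (c'.prev (f j)) (f j) = 0) :
    (K.reindex c f).ExactAt j ↔ K.ExactAt (f j) := by
  rw [exactAt_iff_mono _ (c.next_eq' hjk) h, exactAt_iff_mono _ hk h', K.reindex_d f hjk]

end HomologicalComplex

/-- Fixing the indices above `d` keeps a complex concentrated in degrees `≤ d` concentrated there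
after reindexing; the first case makes `reflect d 0 = d` hold by `rfl`. -/
abbrev reflect (d : ℕ) : ℕ → ℕ
  | 0 => d
  | i + 1 => if i < d then d - (i + 1) else i + 1

lemma reflect_of_le {d i : ℕ} (h : i ≤ d) : reflect d i = d - i := by
  cases i with
  | zero => rfl
  | succ i => simp only [reflect]; split_ifs <;> omega

lemma reflect_of_lt {d i : ℕ} (h : d < i) : reflect d i = i := by
  obtain ⟨i, rfl⟩ := Nat.exists_eq_add_of_lt h
  simp [reflect]

lemma reflect_self (d : ℕ) : reflect d d = 0 := by
  rw [reflect_of_le le_rfl, Nat.sub_self]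

lemma reflect_succ_add_one {d i : ℕ} (h : i < d) : reflect d (i + 1) + 1 = reflect d i := by
  rw [reflect_of_le h, reflect_of_le h.le]
  omega

lemma HomologicalComplex.isZero_X_reflect {V : Type*} [Category* V] [HasZeroMorphisms V]
    {c : ComplexShape ℕ} (K : HomologicalComplex V c) {d : ℕ}
    (hzero : ∀ i, d < i → IsZero (K.X i)) {i : ℕ} (hi : d < i) : IsZero (K.X (reflect d i)) := by
  rw [reflect_of_lt hi]
  exact hzero i hi

section Exactness

variable {V : Type*} [Category* V] [Preadditive V] [HasZeroObject V] {d : ℕ}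

lemma ChainComplex.exactAt_reindex_reflect (K : ChainComplex V ℕ)
    (hzero : ∀ i, d < i → IsZero (K.X i)) (hexact : ∀ n, K.ExactAt (n + 1)) {j : ℕ} (hj : j ≠ d) :
    (K.reindex (.up ℕ) (reflect d)).ExactAt j := by
  obtain hjd | hdj := Nat.lt_or_gt_of_ne hj
  · have hK : K.ExactAt (reflect d j) := by
      rw [reflect_of_le hjd.le, show d - j = (d - j - 1) + 1 by omega]
      exact hexact _
    cases j with
    | zero =>
      refine (exactAt_reindex_iff_of_d_eq_zero K (reflect d) (k := 1) rfl
        ((ComplexShape.down ℕ).next_eq' (reflect_succ_add_one hjd)) ?_ ?_).2 hK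
      · exact (K.reindex _ _).shape _ _ (by simp)
      · exact (hzero _ (by simp [reflect])).eq_of_src _ _
    | succ j =>
      exact (exactAt_reindex_iff K (reflect d) (i := j) (k := j + 2) rfl rfl
        ((ComplexShape.down ℕ).prev_eq' (reflect_succ_add_one (by omega)))
        ((ComplexShape.down ℕ).next_eq' (reflect_succ_add_one hjd))).2 hK
  · exact exactAt_of_isZero_X _ (K.isZero_X_reflect hzero hdj)

lemma CochainComplex.exactAt_reindex_reflect (K : CochainComplex V ℕ)
    (hzero : ∀ i, d < i → IsZero (K.X i)) (hexact : ∀ i < d, K.ExactAt i) (n : ℕ) :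
    (K.reindex (.down ℕ) (reflect d)).ExactAt (n + 1) := by
  obtain hnd | hdn := Nat.lt_or_ge n d
  · have hK : K.ExactAt (reflect d (n + 1)) :=
      hexact _ (by rw [reflect_of_le (show n + 1 ≤ d from hnd)]; omega)
    have hk := (ComplexShape.up ℕ).next_eq' (reflect_succ_add_one hnd)
    obtain hnd' | hdn := Nat.lt_or_ge (n + 1) d
    · exact (exactAt_reindex_iff K (reflect d) (i := n + 2) rfl rfl
        ((ComplexShape.up ℕ).prev_eq' (reflect_succ_add_one hnd')) hk).2 hK
    · have hd2 : d < n + 1 + 1 := by omega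
      refine (exactAt_reindex_iff_of_d_eq_zero K (reflect d) rfl hk ?_ ?_).2 hK
      · rw [ChainComplex.prev]
        exact (K.isZero_X_reflect hzero hd2).eq_of_src _ _
      · rw [reflect_of_le (show n + 1 ≤ d from hnd), show d - (n + 1) = 0 by omega]
        exact K.shape _ _ (by simp)
  · have hdn' : d < n + 1 := by omega
    exact exactAt_of_isZero_X _ (K.isZero_X_reflect hzero hdn')

end Exactness

section TopDegree

variable {V : Type*} [Category* V] [Abelian V] (d : ℕ)

lemma CochainComplex.reindex_reflect_d_comp_pOpcycles (K : CochainComplex V ℕ) :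
    (K.reindex (.down ℕ) (reflect d)).d 1 0 ≫ K.pOpcycles d = 0 := by
  rw [reindex_d _ _ rfl]
  exact K.d_pOpcycles _ _

lemma CochainComplex.exact_reindex_reflect_pOpcycles (K : CochainComplex V ℕ) :
    (ShortComplex.mk _ _ (K.reindex_reflect_d_comp_pOpcycles d)).Exact := by
  cases d with
  | zero =>
    have hd : (K.reindex (.down ℕ) (reflect 0)).d 1 0 = 0 :=
      (K.reindex_d _ rfl).trans (K.shape _ _ (by simp [reflect]))
    exact (ShortComplex.exact_iff_mono _ hd).2 (inferInstanceAs (Mono (K.pOpcycles 0)))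
  | succ e =>
    exact (ShortComplex.exact_mk_iff_of_eq _
      (K.reindex_d (c := .down ℕ) (i := 1) (j := 0) _ rfl)).2
      (ShortComplex.exact_of_g_is_cokernel _ (K.opcyclesIsCokernel _ (e + 1)
        ((ComplexShape.up ℕ).prev_eq' (reflect_succ_add_one e.succ_pos))))

variable (K : ChainComplex V ℕ) {Z : V} {ε : K.X 0 ⟶ Z}

lemma ChainComplex.reindex_reflect_d_prev_comp (w : K.d 1 0 ≫ ε = 0) :
    (K.reindex (.up ℕ) (reflect d)).d ((ComplexShape.up ℕ).prev d) d ≫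
      (K.XIsoOfEq (reflect_self d)).hom ≫ ε = 0 := by
  cases d with
  | zero => rw [(K.reindex _ _).shape _ _ (by simp), zero_comp]
  | succ e =>
    have h1 : reflect (e + 1) e = 1 := by rw [reflect_of_le e.le_succ]; omega
    rw [CochainComplex.prev_nat_succ, reindex_d _ _ rfl, d_comp_XIsoOfEq_hom_assoc,
      ← K.XIsoOfEq_hom_comp_d h1, Category.assoc, w, comp_zero]

variable {d}

lemma ChainComplex.exact_reindex_reflect_top (hzero : ∀ i, d < i → IsZero (K.X i))
    {w : K.d 1 0 ≫ ε = 0} (hε : (ShortComplex.mk _ _ w).Exact) :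
    (ShortComplex.mk _ _ (K.reindex_reflect_d_prev_comp d w)).Exact := by
  cases d with
  | zero =>
    have : Mono ε := hε.mono_g ((hzero 1 one_pos).eq_of_src _ _)
    exact (ShortComplex.exact_iff_mono _ ((K.reindex _ _).shape _ _ (by simp))).2
      (inferInstanceAs (Mono (_ ≫ ε)))
  | succ e =>
    have h1 : reflect (e + 1) ((ComplexShape.up ℕ).prev (e + 1)) = 1 := by
      rw [CochainComplex.prev_nat_succ, reflect_of_le e.le_succ]; omega
    refine (ShortComplex.exact_iff_of_iso (S₁ := .mk _ _ (K.reindex_reflect_d_prev_comp _ w))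
      (S₂ := .mk _ _ w) (ShortComplex.isoMk (K.XIsoOfEq h1) (K.XIsoOfEq (reflect_self _))
        (Iso.refl _) ?_ (by simp))).2 hε
    dsimp only
    rw [XIsoOfEq_hom_comp_d, if_pos (by simp), d_comp_XIsoOfEq_hom]

noncomputable def ChainComplex.homologyReindexReflectIso (hzero : ∀ i, d < i → IsZero (K.X i))
    {w : K.d 1 0 ≫ ε = 0} (hε : (ShortComplex.mk _ _ w).Exact) [Epi ε] :
    (K.reindex (.up ℕ) (reflect d)).homology d ≅ Z :=
  (K.reindex (.up ℕ) (reflect d)).isoHomologyι d (d + 1) (by simp)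
      ((K.isZero_X_reflect hzero (Nat.lt_succ_self d)).eq_of_tgt _ _) ≪≫
    ((K.reindex (.up ℕ) (reflect d)).opcyclesIsCokernel _ d rfl).coconePointUniqueUpToIso
      (K.exact_reindex_reflect_top hzero hε).gIsCokernel

end TopDegree

namespace ModuleCat

variable {R : Type u} [CommRing R]

abbrev dual (A : ModuleCat.{u} R) : ModuleCat.{u} R := ModuleCat.of R (A ⟶ ModuleCat.of R R)

lemma isZero_dual {A : ModuleCat.{u} R} (h : IsZero A) : IsZero A.dual :=
  @isZero_of_subsingleton _ _ _ ⟨fun f g => h.eq_of_src f g⟩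

variable (A : ModuleCat.{u} R) [Module.Finite R A] [Module.Projective R A]

instance : Module.Projective R (A ⟶ ModuleCat.of R R) :=
  Module.Projective.of_equiv (homLinearEquiv (S := R)).symm

instance : Module.Finite R (A ⟶ ModuleCat.of R R) :=
  Module.Finite.equiv (homLinearEquiv (S := R)).symm

noncomputable def doubleDualIso : A ≅ A.dual.dual :=
  (((Module.evalEquiv R A).trans
    (homLinearEquiv (M := A) (N := of R R) (S := R)).dualMap).trans
    (homLinearEquiv (M := A.dual) (N := of R R) (S := R)).symm).toModuleIso

lemma projective_dual (A : ModuleCat.{u} R) [Module.Finite R A] [Projective A] :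
    Projective A.dual :=
  inferInstance

end ModuleCat

noncomputable def ChainComplex.reindexIsoDualDual {R : Type u} [CommRing R]
    (K : ChainComplex (ModuleCat.{u} R) ℕ) [∀ i, Module.Finite R (K.X i)]
    [∀ i, Module.Projective R (K.X i)] (f : ℕ → ℕ) :
    K.reindex (.up ℕ) f ≅ ChainComplex.linearYonedaObj
      ((K.linearYonedaObj R (ModuleCat.of R R)).reindex (.down ℕ) f) R (ModuleCat.of R R) :=
  Hom.isoOfComponents (fun i => (K.X (f i)).doubleDualIso) fun i j hij => by
    rw [reindex_d _ _ hij, ChainComplex.linearYonedaObj_d,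
      reindex_d (c := .down ℕ) _ _ (show (ComplexShape.down ℕ).Rel j i from hij)]
    rfl

theorem hasFinProjResLength_iff (R : Type u) [CommRing R] (d : ℕ) (M : ModuleCat.{u} R) :
    HasFinProjResLength R d M ↔ ∃ P : ProjectiveResolution M,
      (∀ i, Module.Finite R (P.complex.X i)) ∧ ∀ i, d < i → IsZero (P.complex.X i) := by
  constructor
  · rintro ⟨K, ε, hproj, hfin, hzero, hε, ⟨w, hexact₀⟩, hexact⟩
    exact ⟨.ofExact K hproj ε w hexact₀ hexact, hfin, hzero⟩
  · rintro ⟨P, hfin, hzero⟩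
    exact ⟨P.complex, P.π.f 0, P.projective, hfin, hzero,
      epi_of_isColimit_cofork P.isColimitCokernelCofork, ⟨_, P.exact₀⟩, P.complex_exactAt_succ⟩

theorem HasFinProjResLength.finite {R : Type u} [CommRing R] {d : ℕ} {M : ModuleCat.{u} R}
    (h : HasFinProjResLength R d M) : Module.Finite R M := by
  obtain ⟨P, ε, -, hfin, -, hε, -⟩ := h
  exact Module.Finite.of_surjective ε.hom ((ModuleCat.epi_iff_surjective ε).1 hε)

namespace CategoryTheory.ProjectiveResolution

variable {R : Type u} [CommRing R] {d : ℕ} {M : ModuleCat.{u} R} (P : ProjectiveResolution M)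
  (hzero : ∀ i, d < i → IsZero (P.complex.X i))

include hzero in
lemma isZero_linearYonedaObj_X {i : ℕ} (hi : d < i) :
    IsZero ((P.complex.linearYonedaObj R (ModuleCat.of R R)).X i) :=
  ModuleCat.isZero_dual (hzero i hi)

lemma exactAt_linearYonedaObj_iff (i : ℕ) :
    (P.complex.linearYonedaObj R (ModuleCat.of R R)).ExactAt i ↔
      IsZero (extModule R i M (ModuleCat.of R R)) := by
  rw [exactAt_iff_isZero_homology]
  exact ⟨fun h => h.of_iso (P.isoExt i _), fun h => h.of_iso (P.isoExt i _).symm⟩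

noncomputable def extIsoOpcycles :
    extModule R d M (ModuleCat.of R R) ≅
      (P.complex.linearYonedaObj R (ModuleCat.of R R)).opcycles d :=
  P.isoExt d _ ≪≫ (P.complex.linearYonedaObj R _).isoHomologyι d (d + 1) (by simp)
    ((P.isZero_linearYonedaObj_X hzero (Nat.lt_succ_self d)).eq_of_tgt _ _)

variable [∀ i, Module.Finite R (P.complex.X i)]
  (hext : ∀ i < d, IsZero (extModule R i M (ModuleCat.of R R)))

include hext in
noncomputable def dualResolution : ProjectiveResolution (extModule R d M (ModuleCat.of R R)) :=
  let C := P.complex.linearYonedaObj R (ModuleCat.of R R)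
  ofExact (C.reindex (.down ℕ) (reflect d)) (fun i => (P.complex.X (reflect d i)).projective_dual)
    (C.pOpcycles d ≫ (P.extIsoOpcycles hzero).inv)
    (by rw [← Category.assoc, C.reindex_reflect_d_comp_pOpcycles, zero_comp])
    (ShortComplex.exact_of_iso (S₁ := .mk _ _ (C.reindex_reflect_d_comp_pOpcycles d))
      (ShortComplex.isoMk (Iso.refl _) (Iso.refl _) (P.extIsoOpcycles hzero).symm (by simp)
        (by simp)) (C.exact_reindex_reflect_pOpcycles d))
    (C.exactAt_reindex_reflect (fun i => P.isZero_linearYonedaObj_X hzero)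
      (fun i hi => (P.exactAt_linearYonedaObj_iff i).2 (hext i hi)))

noncomputable def extDualResolutionIso (i : ℕ) :
    extModule R i (extModule R d M (ModuleCat.of R R)) (ModuleCat.of R R) ≅
      (P.complex.reindex (.up ℕ) (reflect d)).homology i :=
  (P.dualResolution hzero hext).isoExt i _ ≪≫ homologyMapIso (P.complex.reindexIsoDualDual _).symm i

end CategoryTheory.ProjectiveResolution

theorem stmt_11_general (R : Type u) [CommRing R] (d : ℕ)
    (M : ModuleCat.{u} R)
    (hMres : HasFinProjResLength R d M)
    (hMext : ∀ i : ℕ, i < d → IsZero (extModule R i M (ModuleCat.of R R))) :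
    Module.Finite R (extModule R d M (ModuleCat.of R R)) ∧
    HasFinProjResLength R d (extModule R d M (ModuleCat.of R R)) ∧
    (∀ i : ℕ, i ≠ d → IsZero
      (extModule R i (extModule R d M (ModuleCat.of R R)) (ModuleCat.of R R))) ∧
    Nonempty (M ≅ extModule R d (extModule R d M (ModuleCat.of R R))
      (ModuleCat.of R R)) := by
  obtain ⟨P, hfin, hzero⟩ := (hasFinProjResLength_iff R d M).1 hMres
  have hN : HasFinProjResLength R d (extModule R d M (ModuleCat.of R R)) :=
    (hasFinProjResLength_iff R d _).2 ⟨P.dualResolution hzero hMext,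
      fun i => inferInstanceAs (Module.Finite R (P.complex.X _).dual),
      fun i hi => P.isZero_linearYonedaObj_X hzero (by rwa [reflect_of_lt hi])⟩
  refine ⟨hN.finite, hN, fun i hi => ?_, ⟨?_⟩⟩
  · exact (P.complex.exactAt_reindex_reflect hzero P.complex_exactAt_succ hi).isZero_homology.of_iso
      (P.extDualResolutionIso hzero hMext i)
  · exact (P.complex.homologyReindexReflectIso hzero P.exact₀).symm ≪≫
      (P.extDualResolutionIso hzero hMext d).symm

/-- Let `R` be a commutative noetherian ring and `d ≥ 0`.  Let `M` be a
finitely generated `R`-module admitting a resolution `0 → P_d → ⋯ → P_0 → M → 0` by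
finitely generated projective `R`-modules, with `Ext^i_R(M, R) = 0` for all `i < d`.
Then `N := Ext^d_R(M, R)` is a finitely generated `R`-module admitting a resolution of
length at most `d` by finitely generated projective `R`-modules, `Ext^i_R(N, R) = 0`
for all `i ≠ d`, and `M ≅ Ext^d_R(Ext^d_R(M, R), R)`. -/
theorem stmt_11 (R : Type u) [CommRing R] [IsNoetherianRing R] (d : ℕ)
    (M : ModuleCat.{u} R) (hMfin : Module.Finite R M)
    (hMres : HasFinProjResLength R d M)
    (hMext : ∀ i : ℕ, i < d → IsZero (extModule R i M (ModuleCat.of R R))) :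
    Module.Finite R (extModule R d M (ModuleCat.of R R)) ∧
    HasFinProjResLength R d (extModule R d M (ModuleCat.of R R)) ∧
    (∀ i : ℕ, i ≠ d → IsZero
      (extModule R i (extModule R d M (ModuleCat.of R R)) (ModuleCat.of R R))) ∧
    Nonempty (M ≅ extModule R d (extModule R d M (ModuleCat.of R R))
      (ModuleCat.of R R)) :=
  stmt_11_general R d M hMres hMext
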